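/- The Boltzmann collision operator Q of the knowledge-growth model is Lipschitz continuous on the unit ball of L¹₊(ℝ₊), uniformly in time: for all nonnegative f, g ∈ L¹(ℝ₊) with ‖f‖_{L¹} ≤ 1 and ‖g‖_{L¹} ≤ 1, one has ‖Q(f,f) − Q(g,g)‖_{L¹(ℝ₊)} ≤ 4 ᾱ k̄ ‖f − g‖_{L¹(ℝ₊)}. -/
import Mathlib

open MeasureTheory Set Filter Real

private lemma int_helper {s : Set ℝ} {φ u : ℝ → ℝ} {C : ℝ}
    (hu : IntegrableOn u s)
    (hφm : AEStronglyMeasurable φ (volume.restrict s))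
    (hbound : ∀ᵐ y ∂(volume.restrict s), |φ y| ≤ C) :
    IntegrableOn (fun y => φ y * u y) s := by
  refine (hu.abs.const_mul C).mono' (hφm.mul hu.aestronglyMeasurable) ?_
  filter_upwards [hbound] with y hy
  rw [Real.norm_eq_abs, abs_mul]
  exact mul_le_mul_of_nonneg_right hy (abs_nonneg _)

private lemma inner_bound {s : Set ℝ} {φ u : ℝ → ℝ} {C : ℝ} (hC : 0 ≤ C)
    (hu : IntegrableOn u (Ioi 0)) (hsub : s ⊆ Ioi 0)
    (hφm : AEStronglyMeasurable φ (volume.restrict s))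
    (hbound : ∀ᵐ y ∂(volume.restrict s), |φ y| ≤ C) :
    |∫ y in s, φ y * u y| ≤ C * ∫ y in Ioi (0:ℝ), |u y| := by
  have hus : IntegrableOn u s := hu.mono_set hsub
  calc |∫ y in s, φ y * u y|
      ≤ ∫ y in s, |φ y * u y| := by
        simpa only [Real.norm_eq_abs] using
          norm_integral_le_integral_norm (μ := volume.restrict s) (fun y => φ y * u y)
    _ ≤ ∫ y in s, C * |u y| := by
        refine integral_mono_of_nonneg (Eventually.of_forall fun y => abs_nonneg _)
          (hus.abs.const_mul C) ?_
        filter_upwards [hbound] with y hy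
        rw [abs_mul]
        exact mul_le_mul_of_nonneg_right hy (abs_nonneg _)
    _ = C * ∫ y in s, |u y| := integral_const_mul _ _
    _ ≤ C * ∫ y in Ioi (0:ℝ), |u y| := by
        refine mul_le_mul_of_nonneg_left ?_ hC
        exact setIntegral_mono_set hu.abs (Eventually.of_forall fun y => abs_nonneg _)
          (HasSubset.Subset.eventuallyLE hsub)

/-- The Boltzmann collision operator
`Q(f,f)(z) = f(z)∫₀^z α(y,t)k(z,y)f(y) dy − α(z,t)f(z)∫_z^∞ k(y,z)f(y) dy`
of the knowledge-growth model is Lipschitz continuous on the unit ball of `L¹₊(ℝ₊)`, uniformly in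
time: for nonnegative `f, g ∈ L¹(ℝ₊)` with `‖f‖_{L¹} ≤ 1`, `‖g‖_{L¹} ≤ 1`,
`‖Q(f,f) − Q(g,g)‖_{L¹(ℝ₊)} ≤ 4 ᾱ k̄ ‖f − g‖_{L¹(ℝ₊)}`. -/
theorem collision_operator_lipschitz
    (α k : ℝ → ℝ → ℝ) (αbar kbar : ℝ) (t : ℝ) (ht : 0 ≤ t)
    (hα_meas : Measurable fun z => α z t)
    (hα_nonneg : ∀ z : ℝ, 0 ≤ z → 0 ≤ α z t)
    (hα_bdd : ∀ z : ℝ, 0 ≤ z → α z t ≤ αbar)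
    (hk_meas : Measurable fun p : ℝ × ℝ => k p.1 p.2)
    (hk_nonneg : ∀ z y : ℝ, 0 ≤ y → y < z → 0 ≤ k z y)
    (hk_bdd : ∀ z y : ℝ, 0 ≤ y → y < z → k z y ≤ kbar)
    (f g : ℝ → ℝ)
    (hf_int : IntegrableOn f (Ioi 0)) (hg_int : IntegrableOn g (Ioi 0))
    (hf_nonneg : ∀ z : ℝ, 0 ≤ z → 0 ≤ f z)
    (hg_nonneg : ∀ z : ℝ, 0 ≤ z → 0 ≤ g z)
    (hf_ball : ∫ z in Ioi (0:ℝ), |f z| ≤ 1)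
    (hg_ball : ∫ z in Ioi (0:ℝ), |g z| ≤ 1) :
    ∫ z in Ioi (0:ℝ),
        |(f z * (∫ y in Ioc (0:ℝ) z, α y t * k z y * f y)
            - α z t * f z * ∫ y in Ioi z, k y z * f y)
          - (g z * (∫ y in Ioc (0:ℝ) z, α y t * k z y * g y)
            - α z t * g z * ∫ y in Ioi z, k y z * g y)|
      ≤ 4 * αbar * kbar * ∫ z in Ioi (0:ℝ), |f z - g z| := by
  have hαbar0 : 0 ≤ αbar := (hα_nonneg 0 le_rfl).trans (hα_bdd 0 le_rfl)
  have hkbar0 : 0 ≤ kbar := (hk_nonneg 1 0 le_rfl one_pos).trans (hk_bdd 1 0 le_rfl one_pos)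
  set D : ℝ := ∫ z in Ioi (0:ℝ), |f z - g z| with hD
  have hD0 : 0 ≤ D := integral_nonneg fun z => abs_nonneg _
  have hfg_int : IntegrableOn (fun y => f y - g y) (Ioi 0) := hf_int.sub hg_int
  have hck : 0 ≤ αbar * kbar := mul_nonneg hαbar0 hkbar0
  have key : ∀ z : ℝ, z ∈ Ioi (0:ℝ) →
      |(f z * (∫ y in Ioc (0:ℝ) z, α y t * k z y * f y)
          - α z t * f z * ∫ y in Ioi z, k y z * f y)
        - (g z * (∫ y in Ioc (0:ℝ) z, α y t * k z y * g y)
          - α z t * g z * ∫ y in Ioi z, k y z * g y)|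
      ≤ 2 * (αbar * kbar) * |f z - g z| + (2 * (αbar * kbar * D)) * |g z| := by
    intro z hz
    have hz0 : (0:ℝ) < z := hz
    have hφA : Measurable fun y => α y t * k z y :=
      hα_meas.mul (hk_meas.comp (measurable_const.prodMk measurable_id))
    have hφB : Measurable fun y => k y z :=
      hk_meas.comp (measurable_id.prodMk measurable_const)
    have hsubA : Ioc (0:ℝ) z ⊆ Ioi 0 := Ioc_subset_Ioi_self
    have hsubB : Ioi z ⊆ Ioi (0:ℝ) := Ioi_subset_Ioi hz0.le
    have hboundA : ∀ᵐ y ∂(volume.restrict (Ioc (0:ℝ) z)), |α y t * k z y| ≤ αbar * kbar := by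
      have hne : ∀ᵐ y : ℝ, y ≠ z := by
        refine ae_iff.2 ?_
        simpa using measure_singleton (α := ℝ) z
      filter_upwards [ae_restrict_mem measurableSet_Ioc, ae_restrict_of_ae hne] with y hy hyz
      have h1 : 0 < y := hy.1
      have h2 : y < z := lt_of_le_of_ne hy.2 hyz
      rw [abs_mul, abs_of_nonneg (hα_nonneg y h1.le), abs_of_nonneg (hk_nonneg z y h1.le h2)]
      exact mul_le_mul (hα_bdd y h1.le) (hk_bdd z y h1.le h2) (hk_nonneg z y h1.le h2) hαbar0
    have hboundB : ∀ᵐ y ∂(volume.restrict (Ioi z)), |k y z| ≤ kbar := by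
      filter_upwards [ae_restrict_mem measurableSet_Ioi] with y hy
      rw [abs_of_nonneg (hk_nonneg y z hz0.le hy)]
      exact hk_bdd y z hz0.le hy
    -- bounds on inner integrals
    have hAf : |∫ y in Ioc (0:ℝ) z, α y t * k z y * f y| ≤ αbar * kbar :=
      (inner_bound hck hf_int hsubA hφA.aestronglyMeasurable hboundA).trans
        (by nlinarith [hf_ball])
    have hBf : |∫ y in Ioi z, k y z * f y| ≤ kbar :=
      (inner_bound hkbar0 hf_int hsubB hφB.aestronglyMeasurable hboundB).trans
        (by nlinarith [hf_ball])
    have hAd : |(∫ y in Ioc (0:ℝ) z, α y t * k z y * f y)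
        - ∫ y in Ioc (0:ℝ) z, α y t * k z y * g y| ≤ αbar * kbar * D := by
      have h1 := int_helper (hf_int.mono_set hsubA) hφA.aestronglyMeasurable hboundA
      have h2 := int_helper (hg_int.mono_set hsubA) hφA.aestronglyMeasurable hboundA
      rw [← integral_sub h1 h2]
      simp only [← mul_sub]
      exact inner_bound hck hfg_int hsubA hφA.aestronglyMeasurable hboundA
    have hBd : |(∫ y in Ioi z, k y z * f y) - ∫ y in Ioi z, k y z * g y| ≤ kbar * D := by
      have h1 := int_helper (hf_int.mono_set hsubB) hφB.aestronglyMeasurable hboundB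
      have h2 := int_helper (hg_int.mono_set hsubB) hφB.aestronglyMeasurable hboundB
      rw [← integral_sub h1 h2]
      simp only [← mul_sub]
      exact inner_bound hkbar0 hfg_int hsubB hφB.aestronglyMeasurable hboundB
    set Af := ∫ y in Ioc (0:ℝ) z, α y t * k z y * f y
    set Ag := ∫ y in Ioc (0:ℝ) z, α y t * k z y * g y
    set Bf := ∫ y in Ioi z, k y z * f y
    set Bg := ∫ y in Ioi z, k y z * g y
    have hα1 : |α z t| ≤ αbar := by
      rw [abs_of_nonneg (hα_nonneg z hz0.le)]; exact hα_bdd z hz0.le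
    have hstep1 : |f z * Af - g z * Ag| ≤
        |f z - g z| * (αbar * kbar) + |g z| * (αbar * kbar * D) := by
      calc |f z * Af - g z * Ag|
          = |(f z - g z) * Af + g z * (Af - Ag)| := by ring_nf
        _ ≤ |(f z - g z) * Af| + |g z * (Af - Ag)| := abs_add_le _ _
        _ = |f z - g z| * |Af| + |g z| * |Af - Ag| := by rw [abs_mul, abs_mul]
        _ ≤ |f z - g z| * (αbar * kbar) + |g z| * (αbar * kbar * D) :=
            add_le_add (mul_le_mul_of_nonneg_left hAf (abs_nonneg _))
              (mul_le_mul_of_nonneg_left hAd (abs_nonneg _))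
    have hstep2 : |f z * Bf - g z * Bg| ≤ |f z - g z| * kbar + |g z| * (kbar * D) := by
      calc |f z * Bf - g z * Bg|
          = |(f z - g z) * Bf + g z * (Bf - Bg)| := by ring_nf
        _ ≤ |(f z - g z) * Bf| + |g z * (Bf - Bg)| := abs_add_le _ _
        _ = |f z - g z| * |Bf| + |g z| * |Bf - Bg| := by rw [abs_mul, abs_mul]
        _ ≤ |f z - g z| * kbar + |g z| * (kbar * D) :=
            add_le_add (mul_le_mul_of_nonneg_left hBf (abs_nonneg _))
              (mul_le_mul_of_nonneg_left hBd (abs_nonneg _))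
    calc |(f z * Af - α z t * f z * Bf) - (g z * Ag - α z t * g z * Bg)|
        = |(f z * Af - g z * Ag) - α z t * (f z * Bf - g z * Bg)| := by ring_nf
      _ ≤ |f z * Af - g z * Ag| + |α z t * (f z * Bf - g z * Bg)| := abs_sub _ _
      _ = |f z * Af - g z * Ag| + |α z t| * |f z * Bf - g z * Bg| := by rw [abs_mul]
      _ ≤ (|f z - g z| * (αbar * kbar) + |g z| * (αbar * kbar * D))
            + αbar * (|f z - g z| * kbar + |g z| * (kbar * D)) :=
          add_le_add hstep1
            (mul_le_mul hα1 hstep2 (abs_nonneg _) hαbar0)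
      _ = 2 * (αbar * kbar) * |f z - g z| + (2 * (αbar * kbar * D)) * |g z| := by ring
  have hbd_int : IntegrableOn
      (fun z => 2 * (αbar * kbar) * |f z - g z| + (2 * (αbar * kbar * D)) * |g z|)
      (Ioi (0:ℝ)) := (hfg_int.abs.const_mul _).add (hg_int.abs.const_mul _)
  calc ∫ z in Ioi (0:ℝ),
        |(f z * (∫ y in Ioc (0:ℝ) z, α y t * k z y * f y)
            - α z t * f z * ∫ y in Ioi z, k y z * f y)
          - (g z * (∫ y in Ioc (0:ℝ) z, α y t * k z y * g y)
            - α z t * g z * ∫ y in Ioi z, k y z * g y)|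
      ≤ ∫ z in Ioi (0:ℝ),
          (2 * (αbar * kbar) * |f z - g z| + (2 * (αbar * kbar * D)) * |g z|) :=
        integral_mono_of_nonneg (Eventually.of_forall fun z => abs_nonneg _) hbd_int
          ((ae_restrict_iff' measurableSet_Ioi).2 (Eventually.of_forall key))
    _ = 2 * (αbar * kbar) * D + (2 * (αbar * kbar * D)) * ∫ z in Ioi (0:ℝ), |g z| := by
        rw [integral_add (hfg_int.abs.const_mul _) (hg_int.abs.const_mul _),
          integral_const_mul, integral_const_mul, ← hD]
    _ ≤ 4 * αbar * kbar * D := by nlinarith [mul_nonneg hck hD0, hg_ball]
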